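/- Let f_r(m) be the number of words over {1,...,n} with multiplicity vector m = (m_1,...,m_n) avoiding the consecutive pattern 12...r, and let V_k be the set of 0-1 vectors of length n with exactly k ones. Then for m ≠ 0 with all m_i ≥ 0: f_r(m) = Σ_{v∈V_1} f_r(m-v) + Σ_{j≥1} [ -Σ_{v∈V_{jr}} f_r(m-v) + Σ_{v∈V_{jr+1}} f_r(m-v) ], where f_r evaluated at any vector with a negative entry is 0 and f_r(0,...,0) = 1. -/

import Mathlib

def AvoidsInc {α : Type*} [LT α] (r : ℕ) (w : List α) : Prop :=
  ¬ ∃ l : List α, l <:+: w ∧ l.length = r ∧ l.Chain' (· < ·)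

noncomputable def wordAvoidCount (r n : ℕ) (m : Fin n → ℕ) : ℕ :=
  Nat.card {w : List (Fin n) // (∀ j, w.count j = m j) ∧ AvoidsInc r w}

/-- `f_r(m - v)` where `v` is the 0-1 indicator vector of the set `S`;
it is `0` if some coordinate of `m - v` would be negative. -/
noncomputable def wordAvoidCountSub (r n : ℕ) (m : Fin n → ℕ) (S : Finset (Fin n)) : ℤ :=
  if ∀ i ∈ S, 1 ≤ m i then
    (wordAvoidCount r n (fun i => m i - (if i ∈ S then 1 else 0)) : ℤ)
  else 0

/-!
Expand both sides over the words `w` with multiplicity vector `m`. Choosing `v ∈ V_k` and a word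
counted by `f_r(m - v)` is the same as writing `w = u ++ v'` with `v'` the strictly increasing word
on the support of `v` and `u` avoiding `12⋯r`. For a fixed nonempty `w`, the lengths `k` admitting
such a splitting form `[1, s]` with `s < r` if `w` avoids the pattern, and otherwise either nothing
or a window `[a, a + r)` with `a ≥ 1`. The weights of the recurrence (`+1` at `1`, `-1` at `jr`,
`+1` at `jr + 1`) add up to `1` on the former and to `0` on any such window, which is exactly the
indicator of `w` avoiding `12⋯r`.
-/

open Finset

section AvoidsInc

variable {α : Type*} [LT α] {r : ℕ} {l u w : List α}

theorem AvoidsInc.infix (h : AvoidsInc r w) (hu : u <:+: w) : AvoidsInc r u :=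
  fun ⟨l, hl, hlr, hc⟩ => h ⟨l, hl.trans hu, hlr, hc⟩

theorem AvoidsInc.pos (h : AvoidsInc r w) : 0 < r :=
  Nat.pos_of_ne_zero fun hr => h ⟨[], List.nil_infix, hr ▸ rfl, List.isChain_nil⟩

theorem AvoidsInc.not_isChain (h : AvoidsInc r w) (hl : l <:+: w) (hr : r ≤ l.length) :
    ¬ l.IsChain (· < ·) := fun hc =>
  h ⟨l.take r, (List.take_prefix r l).isInfix.trans hl, List.length_take_of_le hr,
    hc.infix (List.take_prefix r l).isInfix⟩

theorem AvoidsInc.exists_isChain_concat (hu : AvoidsInc r u) {b : α}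
    (h : ¬ AvoidsInc r (u ++ [b])) :
    ∃ x, x <:+ u ∧ x.length + 1 = r ∧ (x ++ [b]).IsChain (· < ·) := by
  obtain ⟨l, hl, hlr, hc⟩ := not_not.1 h
  rcases List.infix_concat_iff.1 hl with hs | hi
  · rcases List.suffix_concat_iff.1 hs with rfl | ⟨x, rfl, hx⟩
    · exact absurd (by simpa using hlr) hu.pos.ne
    · exact ⟨x, hx, by simpa using hlr, hc⟩
  · exact absurd ⟨l, hi, hlr, hc⟩ hu

end AvoidsInc

/-- The words counted by `∑_{v ∈ V_k} f_r(m - v)`, with `v` read as its increasing word. -/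
def IncTailSplit {α : Type*} [LT α] (r k : ℕ) (w : List α) : Prop :=
  ∃ u v, w = u ++ v ∧ v.length = k ∧ v.IsChain (· < ·) ∧ AvoidsInc r u

section IncTailSplit

variable {α : Type*} {r k : ℕ} {p u v w y z : List α}

theorem IncTailSplit.pos [LT α] (h : IncTailSplit r k w) : 0 < r :=
  let ⟨_, _, _, _, _, hu⟩ := h; hu.pos

theorem IncTailSplit.le_card [Preorder α] [Fintype α] (h : IncTailSplit r k w) :
    k ≤ Fintype.card α := by
  obtain ⟨u, v, -, rfl, hv, -⟩ := h
  exact (List.sortedLT_iff_isChain.2 hv).nodup.length_le_card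

theorem AvoidsInc.incTailSplit_one [LT α] (h : AvoidsInc r w) (hw : w ≠ []) :
    IncTailSplit r 1 w :=
  ⟨w.dropLast, [w.getLast hw], (List.dropLast_append_getLast hw).symm, rfl,
    List.isChain_singleton _, h.infix (List.dropLast_prefix w).isInfix⟩

theorem AvoidsInc.not_incTailSplit [LT α] (h : AvoidsInc r w) (hk : r ≤ k) :
    ¬ IncTailSplit r k w := by
  rintro ⟨u, v, rfl, rfl, hv, -⟩
  exact h.not_isChain (List.suffix_append u v).isInfix hk hv

theorem AvoidsInc.not_isChain_of_suffix [LT α] (hu : AvoidsInc r u) (hy : y <:+ u ++ v)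
    (hlen : v.length + r ≤ y.length) : ¬ y.IsChain (· < ·) := by
  obtain ⟨y', rfl⟩ := List.suffix_of_suffix_length_le (List.suffix_append u v) hy (by omega)
  intro hc
  refine hu.not_isChain (List.suffix_append_self_iff.1 hy).isInfix ?_
    (hc.infix (List.prefix_append y' v).isInfix)
  simp only [List.length_append] at hlen
  omega

theorem IncTailSplit.of_suffix_of_prefix [LT α] (hz : z <:+ w) (hzc : z.IsChain (· < ·))
    (hp : p <+: w) (hpa : AvoidsInc r p) (hkz : k ≤ z.length) (hkp : w.length ≤ p.length + k) :
    IncTailSplit r k w := by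
  have := hz.length_le
  refine ⟨w.take (w.length - k), w.drop (w.length - k), (List.take_append_drop _ _).symm,
    by rw [List.length_drop]; omega, hzc.infix ?_, hpa.infix ?_⟩
  · exact (List.suffix_of_suffix_length_le (List.drop_suffix _ _) hz
      (by rw [List.length_drop]; omega)).isInfix
  · exact (List.prefix_of_prefix_length_le (List.take_prefix _ _) hp
      (by rw [List.length_take]; omega)).isInfix

/-- `a` is the least length of `v` for which `u` avoids `12⋯r`; the occurrence of `12⋯r` in the
next longer prefix ends at the first letter of `v` and glues onto `v`. -/
theorem exists_incTailSplit_iff_window [Preorder α] (hw : ¬ AvoidsInc r w)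
    {k₁ : ℕ} (h₁ : IncTailSplit r k₁ w) :
    ∃ a, 0 < a ∧ ∀ k, IncTailSplit r k w ↔ a ≤ k ∧ k < a + r := by
  classical
  have hP : ∃ k, ∃ u v, w = u ++ v ∧ v.length = k ∧ AvoidsInc r u :=
    let ⟨u, v, hw, hv, _, hu⟩ := h₁; ⟨k₁, u, v, hw, hv, hu⟩
  obtain ⟨u₀, v₀, hw₀, hv₀, hu₀⟩ := Nat.find_spec hP
  have hmin : ∀ {u v}, w = u ++ v → AvoidsInc r u → Nat.find hP ≤ v.length :=
    fun hw hu => Nat.find_min' hP ⟨_, _, hw, rfl, hu⟩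
  obtain ⟨b, t, rfl⟩ : ∃ b t, v₀ = b :: t := by
    refine List.exists_cons_of_ne_nil fun h => hw ?_
    rwa [hw₀, h, List.append_nil]
  have hnot : ¬ AvoidsInc r (u₀ ++ [b]) := fun h => by
    have := hmin (by simpa using hw₀) h
    simp only [List.length_cons] at hv₀
    omega
  have hv₀c : (b :: t).IsChain (· < ·) := by
    obtain ⟨u₁, v₁, hw₁, hv₁, hc₁, hu₁⟩ := h₁
    refine hc₁.infix (List.suffix_of_suffix_length_le (l₃ := w) ?_ ?_ ?_).isInfix
    · exact hw₀ ▸ List.suffix_append u₀ _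
    · exact hw₁ ▸ List.suffix_append u₁ v₁
    · exact hv₀ ▸ hmin hw₁ hu₁
  obtain ⟨x, hx, hxr, hxc⟩ := hu₀.exists_isChain_concat hnot
  have hz : (x ++ b :: t).IsChain (· < ·) := by
    simpa using hxc.append_overlap (l₃ := t) (by simpa using hv₀c) (List.cons_ne_nil b [])
  have hzw : x ++ b :: t <:+ w := by
    obtain ⟨s, rfl⟩ := hx
    exact ⟨s, by simp [hw₀]⟩
  refine ⟨Nat.find hP, by simp [← hv₀], fun k => ⟨?_, ?_⟩⟩
  · rintro ⟨u, v, hw, rfl, hc, hu⟩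
    refine ⟨hmin hw hu, Nat.lt_of_not_ge fun hk => ?_⟩
    exact hu₀.not_isChain_of_suffix (hw₀ ▸ hw ▸ List.suffix_append u v) (by omega) hc
  · rintro ⟨hak, hkr⟩
    have hwlen : w.length = u₀.length + (t.length + 1) := by
      rw [hw₀, List.length_append, List.length_cons]
    simp only [List.length_cons] at hv₀
    refine IncTailSplit.of_suffix_of_prefix hzw hz (hw₀ ▸ List.prefix_append u₀ _) hu₀ ?_ ?_
    · simp only [List.length_append, List.length_cons]
      omega
    · omega

end IncTailSplit

def recurrenceSum (r n : ℕ) (g : ℕ → ℤ) : ℤ :=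
  g 1 + ∑ j ∈ Icc 1 n, (-g (j * r) + g (j * r + 1))

section recurrenceSum

variable {r n a : ℕ}

theorem recurrenceSum_sum {ι : Type*} (s : Finset ι) (g : ι → ℕ → ℤ) :
    recurrenceSum r n (fun k => ∑ i ∈ s, g i k) = ∑ i ∈ s, recurrenceSum r n (g i) := by
  simp only [recurrenceSum, sum_add_distrib, sum_neg_distrib]
  rw [sum_comm (s := Icc 1 n), sum_comm (s := Icc 1 n)]

theorem recurrenceSum_ite_eq_one (P : ℕ → Prop) [DecidablePred P] (h₁ : P 1)
    (hr : ∀ k, r ≤ k → ¬ P k) : recurrenceSum r n (fun k => if P k then 1 else 0) = 1 := by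
  rw [recurrenceSum, if_pos h₁, add_eq_left]
  refine sum_eq_zero fun j hj => ?_
  have hjr : r ≤ j * r := Nat.le_mul_of_pos_left r (mem_Icc.1 hj).1
  rw [if_neg (hr _ hjr), if_neg (hr _ (by omega)), neg_zero, add_zero]

theorem le_mul_and_mul_lt_add_iff (hr : 0 < r) (j : ℕ) :
    a ≤ j * r ∧ j * r < a + r ↔ j = (a + r - 1) / r := by
  have h₁ := Nat.le_div_iff_mul_le hr (x := j) (y := a + r - 1)
  have h₂ := Nat.div_lt_iff_lt_mul hr (x := a + r - 1) (y := j + 1)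
  rw [add_one_mul] at h₂
  omega

theorem sum_Icc_ite_mul_mem_Ico (hr : 0 < r) (ha : 0 < a) (han : a + r ≤ n + 1) :
    ∑ j ∈ Icc 1 n, (if a ≤ j * r ∧ j * r < a + r then 1 else 0 : ℤ) = 1 := by
  simp_rw [le_mul_and_mul_lt_add_iff hr, sum_ite_eq', mem_Icc]
  obtain ⟨hlo, hhi⟩ := (le_mul_and_mul_lt_add_iff (a := a) hr ((a + r - 1) / r)).2 rfl
  have hq : (a + r - 1) / r ≤ (a + r - 1) / r * r := Nat.le_mul_of_pos_right _ hr
  rw [if_pos ⟨Nat.pos_of_mul_pos_right (ha.trans_le hlo), by omega⟩]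

theorem recurrenceSum_ite_window_eq_zero (hr : 0 < r) (ha : 0 < a) (han : a + r ≤ n + 1) :
    recurrenceSum r n (fun k => if a ≤ k ∧ k < a + r then 1 else 0) = 0 := by
  simp only [recurrenceSum, sum_add_distrib, sum_neg_distrib, sum_Icc_ite_mul_mem_Ico hr ha han]
  -- the element `≡ 1 (mod r)` of the window is `1` itself exactly when `a = 1`
  rcases Nat.lt_or_ge 1 a with ha₁ | ha₁
  · have hshift : ∀ j, (a ≤ j * r + 1 ∧ j * r + 1 < a + r) ↔
        (a - 1 ≤ j * r ∧ j * r < a - 1 + r) := fun j => by omega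
    simp_rw [hshift]
    rw [sum_Icc_ite_mul_mem_Ico (n := n) hr (Nat.sub_pos_of_lt ha₁) (by omega), if_neg (by omega)]
    ring
  · rw [if_pos (by omega), sum_eq_zero fun j hj => if_neg ?_]
    · ring
    · have := Nat.le_mul_of_pos_left r (mem_Icc.1 hj).1
      omega

end recurrenceSum

section SortedTail

variable {α : Type*} [LinearOrder α] {r k : ℕ} {S : Finset α} {w : List α}

theorem incTailSplit_and_toFinset_eq_iff (hS : S.card = k) :
    IncTailSplit r k w ∧ (w.drop (w.length - k)).toFinset = S ↔
      ∃ u, AvoidsInc r u ∧ w = u ++ S.sort (· ≤ ·) := by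
  have hsort : (S.sort (· ≤ ·)).length = k := by rw [Finset.length_sort, hS]
  constructor
  · rintro ⟨⟨u, v, rfl, rfl, hv, hu⟩, hvS⟩
    rw [List.length_append, Nat.add_sub_cancel, List.drop_left] at hvS
    refine ⟨u, hu, ?_⟩
    rw [← hvS, (List.toFinset_sort _ (List.sortedLT_iff_isChain.2 hv).nodup).2
      ((List.isChain_iff_pairwise.1 hv).imp le_of_lt)]
  · rintro ⟨u, hu, rfl⟩
    refine ⟨⟨u, _, rfl, hsort, List.sortedLT_iff_isChain.1 (sortedLT_sort S), hu⟩, ?_⟩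
    rw [List.length_append, hsort, Nat.add_sub_cancel, List.drop_left, sort_toFinset]

theorem count_append_sort (u : List α) (j : α) :
    (u ++ S.sort (· ≤ ·)).count j = u.count j + if j ∈ S then 1 else 0 := by
  rw [List.count_append]
  congr 1
  rw [← Multiset.coe_count, Finset.sort_eq, Multiset.count_eq_of_nodup S.nodup]
  rfl

end SortedTail

section Counting

variable {n : ℕ} {r k : ℕ} {m : Fin n → ℕ} {S : Finset (Fin n)} {w : List (Fin n)}

theorem length_eq_sum_of_count_eq (h : ∀ j, w.count j = m j) : w.length = ∑ j, m j := by
  simpa [h] using (Multiset.sum_count_eq_card (s := univ) (m := (w : Multiset (Fin n)))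
    fun a _ => mem_univ a).symm

theorem finite_setOf_count_eq (m : Fin n → ℕ) :
    {w : List (Fin n) | ∀ j, w.count j = m j}.Finite :=
  (List.finite_length_eq (Fin n) (∑ j, m j)).subset fun _ => length_eq_sum_of_count_eq

noncomputable def wordsWithCount (m : Fin n → ℕ) : Finset (List (Fin n)) :=
  (finite_setOf_count_eq m).toFinset

theorem mem_wordsWithCount : w ∈ wordsWithCount m ↔ ∀ j, w.count j = m j :=
  Set.Finite.mem_toFinset _

open Classical in
theorem wordAvoidCount_eq_card :
    wordAvoidCount r n m = #{w ∈ wordsWithCount m | AvoidsInc r w} := by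
  rw [wordAvoidCount, ← Nat.card_eq_finsetCard]
  exact Nat.card_congr <| Equiv.subtypeEquivRight fun w => by
    rw [mem_filter, mem_wordsWithCount]

open Classical in
theorem card_incTailSplit_fiber (hS : S.card = k) :
    (#{w ∈ wordsWithCount m |
        IncTailSplit r k w ∧ (w.drop (w.length - k)).toFinset = S} : ℤ) =
      wordAvoidCountSub r n m S := by
  unfold wordAvoidCountSub
  split_ifs with hm
  · rw [wordAvoidCount_eq_card, Nat.cast_inj, eq_comm,
      ← card_image_of_injective _ (List.append_left_injective (S.sort (· ≤ ·)))]
    congr 1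
    ext w
    simp only [mem_filter, mem_image, mem_wordsWithCount, incTailSplit_and_toFinset_eq_iff hS]
    constructor
    · rintro ⟨u, ⟨hu, hav⟩, rfl⟩
      refine ⟨fun j => ?_, u, hav, rfl⟩
      rw [count_append_sort, hu j]
      split_ifs with hj
      · have := hm j hj
        omega
      · rfl
    · rintro ⟨hw, u, hu, rfl⟩
      refine ⟨u, ⟨fun j => ?_, hu⟩, rfl⟩
      have := hw j
      rw [count_append_sort] at this
      omega
  · obtain ⟨i, hi, hmi⟩ := not_forall₂.1 hm
    rw [Nat.cast_eq_zero, card_eq_zero, filter_eq_empty_iff]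
    intro w hw hsplit
    obtain ⟨u, -, rfl⟩ := (incTailSplit_and_toFinset_eq_iff hS).1 hsplit
    have := mem_wordsWithCount.1 hw i
    rw [count_append_sort, if_pos hi] at this
    omega

open Classical in
theorem card_filter_incTailSplit :
    (#{w ∈ wordsWithCount m | IncTailSplit r k w} : ℤ) =
      ∑ S ∈ powersetCard k univ, wordAvoidCountSub r n m S := by
  rw [card_eq_sum_card_fiberwise (f := fun w => (w.drop (w.length - k)).toFinset)
    (t := powersetCard k univ)]
  · push_cast
    refine sum_congr rfl fun S hS => ?_
    rw [filter_filter, card_incTailSplit_fiber (mem_powersetCard.1 hS).2]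
  · intro w hw
    obtain ⟨u, v, rfl, rfl, hv, -⟩ := (mem_filter.1 hw).2
    simp only [mem_coe, mem_powersetCard]
    rw [List.length_append, Nat.add_sub_cancel, List.drop_left,
      List.toFinset_card_of_nodup (List.sortedLT_iff_isChain.2 hv).nodup]
    exact ⟨subset_univ _, rfl⟩

end Counting

open Classical in
theorem recurrenceSum_ite_incTailSplit {α : Type*} [Preorder α] [Fintype α] {r n : ℕ}
    (hn : Fintype.card α ≤ n) {w : List α} (hw : w ≠ []) :
    recurrenceSum r n (fun k => if IncTailSplit r k w then 1 else 0) =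
      if AvoidsInc r w then 1 else 0 := by
  by_cases hav : AvoidsInc r w
  · rw [if_pos hav]
    exact recurrenceSum_ite_eq_one _ (hav.incTailSplit_one hw) fun k => hav.not_incTailSplit
  rw [if_neg hav]
  by_cases hsplit : ∃ k, IncTailSplit r k w
  · obtain ⟨k₁, h₁⟩ := hsplit
    obtain ⟨a, ha, hwindow⟩ := exists_incTailSplit_iff_window hav h₁
    have hr := h₁.pos
    have hcard := ((hwindow (a + r - 1)).2 ⟨by omega, by omega⟩).le_card
    simp_rw [hwindow]
    exact recurrenceSum_ite_window_eq_zero hr ha (by omega)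
  · simp [recurrenceSum, not_exists.1 hsplit]

theorem wordAvoidCount_fundamental_recurrence_general (r n : ℕ)
    (m : Fin n → ℕ) (hm : m ≠ 0) :
    (wordAvoidCount r n m : ℤ) =
      (∑ S ∈ Finset.powersetCard 1 (Finset.univ : Finset (Fin n)),
        wordAvoidCountSub r n m S) +
      ∑ j ∈ Finset.Icc 1 n,
        (-(∑ S ∈ Finset.powersetCard (j * r) (Finset.univ : Finset (Fin n)),
            wordAvoidCountSub r n m S) +
          ∑ S ∈ Finset.powersetCard (j * r + 1) (Finset.univ : Finset (Fin n)),
            wordAvoidCountSub r n m S) := by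
  classical
  change _ = recurrenceSum r n fun k => ∑ S ∈ powersetCard k univ, wordAvoidCountSub r n m S
  simp only [← card_filter_incTailSplit, wordAvoidCount_eq_card, natCast_card_filter,
    recurrenceSum_sum]
  refine sum_congr rfl fun w hw => (recurrenceSum_ite_incTailSplit (Fintype.card_fin n).le ?_).symm
  rintro rfl
  exact hm (funext fun j => by simpa using (mem_wordsWithCount.1 hw j).symm)

/-- The fundamental recurrence:
`f_r(m) = ∑_{v ∈ V_1} f_r(m-v) + ∑_{j≥1} [ -∑_{v ∈ V_{jr}} f_r(m-v) + ∑_{v ∈ V_{jr+1}} f_r(m-v) ]`,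
where `V_k` (the set of 0-1 vectors with `k` ones) is identified with the
`k`-element subsets of `Fin n`. -/
theorem wordAvoidCount_fundamental_recurrence (r n : ℕ) (hr : 2 ≤ r)
    (m : Fin n → ℕ) (hm : m ≠ 0) :
    (wordAvoidCount r n m : ℤ) =
      (∑ S ∈ Finset.powersetCard 1 (Finset.univ : Finset (Fin n)),
        wordAvoidCountSub r n m S) +
      ∑ j ∈ Finset.Icc 1 n,
        (-(∑ S ∈ Finset.powersetCard (j * r) (Finset.univ : Finset (Fin n)),
            wordAvoidCountSub r n m S) +
          ∑ S ∈ Finset.powersetCard (j * r + 1) (Finset.univ : Finset (Fin n)),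
            wordAvoidCountSub r n m S) :=
  wordAvoidCount_fundamental_recurrence_general r n m hm
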